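/- Let F be a family of finite graphs closed under substitutions and induced subgraphs, let P be the set of prime graphs in F, and let S be the collection of subfamilies F' ⊆ F that are closed under substitutions and induced subgraphs. If P contains an infinite antichain in the induced-subgraph order, then S has cardinality at least that of the continuum. -/

import Mathlib

def Subst {V1 V2 : Type} (G1 : SimpleGraph V1) (G2 : SimpleGraph V2) (v : V1) :
    SimpleGraph ({u : V1 // u ≠ v} ⊕ V2) where
  Adj x y :=
    match x, y with
    | Sum.inl u, Sum.inl u' => G1.Adj u.1 u'.1
    | Sum.inl u, Sum.inr _ => G1.Adj u.1 v
    | Sum.inr _, Sum.inl u => G1.Adj u.1 v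
    | Sum.inr w, Sum.inr w' => G2.Adj w w'
  symm := by
    constructor
    rintro (u | w) (u' | w') h
    · exact G1.adj_symm h
    · exact h
    · exact h
    · exact G2.adj_symm h
  loopless := by
    constructor
    rintro (u | w) h
    · exact G1.irrefl h
    · exact G2.irrefl h

structure FinGraph : Type 1 where
  V : Type
  finV : Finite V
  G : SimpleGraph V

attribute [instance] FinGraph.finV

def FinGraph.subst (A B : FinGraph) (v : A.V) : FinGraph :=
  ⟨{u : A.V // u ≠ v} ⊕ B.V, inferInstance, Subst A.G B.G v⟩

def FinGraph.induce (A : FinGraph) (s : Set A.V) : FinGraph :=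
  ⟨↥s, inferInstance, SimpleGraph.induce s A.G⟩

def ClosedIso (F : FinGraph → Prop) : Prop :=
  ∀ A B : FinGraph, F A → Nonempty (A.G ≃g B.G) → F B

def ClosedSubst (F : FinGraph → Prop) : Prop :=
  ∀ (A B : FinGraph) (v : A.V), F A → F B → F (A.subst B v)

def ClosedInduced (F : FinGraph → Prop) : Prop :=
  ∀ (A : FinGraph) (s : Set A.V), F A → F (A.induce s)

def IsPrime (A : FinGraph) : Prop :=
  ¬ ∃ (B C : FinGraph) (v : B.V),
      Nat.card B.V < Nat.card A.V ∧ Nat.card C.V < Nat.card A.V ∧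
      Nonempty (A.G ≃g (B.subst C v).G)

def SClosure (P : FinGraph → Prop) (A : FinGraph) : Prop :=
  ∀ F : FinGraph → Prop, ClosedSubst F → ClosedIso F → (∀ B, P B → F B) → F A

/-!
For `S ⊆ ℕ`, the graphs of `F` containing none of the antichain members `f n` with `n ∉ S` form
a subfamily closed under isomorphism and induced subgraphs; since the `f n` are pairwise
incomparable, `f n` belongs to it exactly when `n ∈ S`, so distinct `S` give distinct subfamilies.
Closure under substitution is where primality enters: if a prime `P` embeds into `A[v → B]`, the
vertices landing in `B` form a module of `P`, which must be trivial, so `P` already embeds into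
`A` or into `B`.
-/

def SimpleGraph.IsModule {V : Type} (G : SimpleGraph V) (M : Set V) : Prop :=
  ∀ x ∉ M, ∀ y ∈ M, ∀ y' ∈ M, G.Adj x y ↔ G.Adj x y'

section Subst

variable {V V1 V2 : Type} {G : SimpleGraph V} {G1 : SimpleGraph V1} {G2 : SimpleGraph V2}
  {v : V1}

def substCollapse (v : V1) : {u : V1 // u ≠ v} ⊕ V2 → V1 :=
  Sum.elim Subtype.val fun _ => v

lemma subst_adj_iff_adj_substCollapse {p q : {u : V1 // u ≠ v} ⊕ V2}
    (hpq : p.isLeft ∨ q.isLeft) :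
    (Subst G1 G2 v).Adj p q ↔ G1.Adj (substCollapse v p) (substCollapse v q) := by
  rcases p with p | p <;> rcases q with q | q
  · exact Iff.rfl
  · exact Iff.rfl
  · exact G1.adj_comm _ _
  · simp at hpq

lemma isModule_preimage_range_inr (e : G ↪g Subst G1 G2 v) :
    G.IsModule (e ⁻¹' Set.range Sum.inr) := by
  intro x hx y ⟨w, hw⟩ y' ⟨w', hw'⟩
  obtain ⟨u, hu⟩ : ∃ u, e x = Sum.inl u := by
    rcases hex : e x with u | w
    · exact ⟨u, rfl⟩
    · exact absurd ⟨w, hex.symm⟩ hx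
  rw [← e.map_adj_iff, ← e.map_adj_iff, hu, ← hw, ← hw']
  exact Iff.rfl

lemma nonempty_embedding_left_of_subsingleton (e : G ↪g Subst G1 G2 v)
    (hM : (e ⁻¹' Set.range Sum.inr).Subsingleton) : Nonempty (G ↪g G1) := by
  have hinj : Function.Injective (substCollapse v ∘ e) := by
    intro x y hxy
    rcases hx : e x with u | w <;> rcases hy : e y with u' | w' <;>
      simp only [Function.comp_apply, hx, hy, substCollapse, Sum.elim_inl, Sum.elim_inr] at hxy
    · exact e.injective (by rw [hx, hy, Subtype.ext hxy])
    · exact absurd hxy u.2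
    · exact absurd hxy.symm u'.2
    · exact hM ⟨w, hx.symm⟩ ⟨w', hy.symm⟩
  refine ⟨⟨⟨_, hinj⟩, fun {x y} => ?_⟩⟩
  by_cases hxy : (e x).isLeft ∨ (e y).isLeft
  · exact (subst_adj_iff_adj_substCollapse hxy).symm.trans e.map_adj_iff
  · simp only [not_or, Sum.not_isLeft] at hxy
    obtain rfl : x = y :=
      hM ((Sum.isRight_iff.mp hxy.1).imp fun _ => Eq.symm)
        ((Sum.isRight_iff.mp hxy.2).imp fun _ => Eq.symm)
    simp

lemma nonempty_embedding_right_of_eq_univ (e : G ↪g Subst G1 G2 v)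
    (hM : e ⁻¹' Set.range Sum.inr = Set.univ) : Nonempty (G ↪g G2) := by
  choose w hw using fun x => Set.eq_univ_iff_forall.mp hM x
  refine ⟨⟨⟨w, fun x y hxy => e.injective (by rw [← hw x, ← hw y, hxy])⟩, fun {x y} => ?_⟩⟩
  rw [← e.map_adj_iff, ← hw x, ← hw y]
  exact Iff.rfl

end Subst

lemma SimpleGraph.IsModule.nonempty_iso_subst {P : FinGraph} {M : Set P.V}
    (hM : P.G.IsModule M) {x₀ : P.V} (hx₀ : x₀ ∈ M) :
    Nonempty (P.G ≃g
      ((P.induce (insert x₀ Mᶜ)).subst (P.induce M) ⟨x₀, Set.mem_insert _ _⟩).G) := by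
  have hnotMem : ∀ u : {u : ↥(insert x₀ Mᶜ) // u ≠ ⟨x₀, Set.mem_insert _ _⟩}, u.1.1 ∉ M := by
    rintro ⟨⟨x, rfl | hx⟩, hne⟩
    · exact absurd rfl hne
    · exact hx
  let toP : {u : ↥(insert x₀ Mᶜ) // u ≠ ⟨x₀, Set.mem_insert _ _⟩} ⊕ ↥M → P.V :=
    Sum.elim (fun u => u.1.1) Subtype.val
  have hbij : Function.Bijective toP := by
    refine ⟨?_, fun x => ?_⟩
    · rintro (u | w) (u' | w') h
      · exact congrArg Sum.inl (Subtype.ext (Subtype.ext h))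
      · exact absurd ((show u.1.1 = w'.1 from h) ▸ w'.2) (hnotMem u)
      · exact absurd ((show u'.1.1 = w.1 from h.symm) ▸ w.2) (hnotMem u')
      · exact congrArg Sum.inr (Subtype.ext h)
    · by_cases hx : x ∈ M
      · exact ⟨Sum.inr ⟨x, hx⟩, rfl⟩
      · refine ⟨Sum.inl ⟨⟨x, Or.inr hx⟩, fun h => hx ?_⟩, rfl⟩
        exact (show x = x₀ from congrArg Subtype.val h) ▸ hx₀
  refine ⟨(RelIso.mk (Equiv.ofBijective toP hbij) fun {p q} => ?_).symm⟩
  rcases p with u | w <;> rcases q with u' | w'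
  · exact Iff.rfl
  · exact hM _ (hnotMem u) _ w'.2 _ hx₀
  · exact (P.G.adj_comm _ _).trans (hM _ (hnotMem u') _ w.2 _ hx₀)
  · exact Iff.rfl

lemma IsPrime.subsingleton_or_eq_univ_of_isModule {P : FinGraph} (hP : IsPrime P)
    {M : Set P.V} (hM : P.G.IsModule M) : M.Subsingleton ∨ M = Set.univ := by
  by_contra! h
  obtain ⟨x₀, hx₀, x₁, hx₁, hne⟩ := h.1
  obtain ⟨z, hz⟩ := (Set.ne_univ_iff_exists_notMem M).mp h.2
  have hx₁ : x₁ ∉ insert x₀ Mᶜ := by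
    rintro (h | h)
    exacts [hne h.symm, h hx₁]
  exact hP ⟨_, _, _, Finite.card_subtype_lt hx₁, Finite.card_subtype_lt hz,
    hM.nonempty_iso_subst hx₀⟩

lemma IsPrime.nonempty_embedding_of_embedding_subst {P A B : FinGraph} {v : A.V}
    (hP : IsPrime P) (e : P.G ↪g (A.subst B v).G) :
    Nonempty (P.G ↪g A.G) ∨ Nonempty (P.G ↪g B.G) :=
  (hP.subsingleton_or_eq_univ_of_isModule (isModule_preimage_range_inr e)).imp
    (nonempty_embedding_left_of_subsingleton e) (nonempty_embedding_right_of_eq_univ e)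

def forbOutside (F : FinGraph → Prop) (f : ℕ → FinGraph) (S : Set ℕ) (A : FinGraph) : Prop :=
  F A ∧ ∀ n ∉ S, IsEmpty ((f n).G ↪g A.G)

section forbOutside

variable {F : FinGraph → Prop} {f : ℕ → FinGraph}

lemma closedSubst_forbOutside (hsub : ClosedSubst F) (hprime : ∀ n, IsPrime (f n))
    (S : Set ℕ) : ClosedSubst (forbOutside F f S) := by
  intro A B v hA hB
  refine ⟨hsub A B v hA.1 hB.1, fun n hn => ⟨fun e => ?_⟩⟩
  rcases (hprime n).nonempty_embedding_of_embedding_subst e with h | h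
  exacts [not_isEmpty_iff.mpr h (hA.2 n hn), not_isEmpty_iff.mpr h (hB.2 n hn)]

lemma closedIso_forbOutside (hiso : ClosedIso F) (S : Set ℕ) :
    ClosedIso (forbOutside F f S) := fun A B hA ⟨φ⟩ =>
  ⟨hiso A B hA.1 ⟨φ⟩, fun n hn => ⟨fun e => (hA.2 n hn).false (φ.symm.toEmbedding.comp e)⟩⟩

lemma closedInduced_forbOutside (hind : ClosedInduced F) (S : Set ℕ) :
    ClosedInduced (forbOutside F f S) := fun A s hA =>
  ⟨hind A s hA.1, fun n hn =>
    ⟨fun e => (hA.2 n hn).false ((SimpleGraph.Embedding.induce s).comp e)⟩⟩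

lemma forbOutside_apply_iff (hF : ∀ n, F (f n))
    (hanti : ∀ n m, n ≠ m → ¬ Nonempty ((f n).G ↪g (f m).G)) {S : Set ℕ} {n : ℕ} :
    forbOutside F f S (f n) ↔ n ∈ S :=
  ⟨fun h => by_contra fun hn => (h.2 n hn).false SimpleGraph.Embedding.refl,
    fun hn => ⟨hF n, fun m hm => ⟨fun e => hanti m n (fun h => hm (h ▸ hn)) ⟨e⟩⟩⟩⟩

end forbOutside

/-- if the primes of a substitution- and induced-subgraph-closed family
contain an infinite antichain, the collection of closed subfamilies has size ≥ continuum. -/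
theorem stmt6 (F : FinGraph → Prop) (hiso : ClosedIso F) (hsub : ClosedSubst F)
    (hind : ClosedInduced F)
    (hanti : ∃ f : ℕ → FinGraph, (∀ n, F (f n) ∧ IsPrime (f n)) ∧
      ∀ n m, n ≠ m → ¬ Nonempty ((f n).G ↪g (f m).G)) :
    Cardinal.continuum ≤ Cardinal.mk
      {F' : FinGraph → Prop //
        (∀ A, F' A → F A) ∧ ClosedSubst F' ∧ ClosedIso F' ∧ ClosedInduced F'} := by
  obtain ⟨f, hf, hanti⟩ := hanti
  let family (S : Set ℕ) : {F' : FinGraph → Prop //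
      (∀ A, F' A → F A) ∧ ClosedSubst F' ∧ ClosedIso F' ∧ ClosedInduced F'} :=
    ⟨forbOutside F f S, fun _ hA => hA.1, closedSubst_forbOutside hsub (fun n => (hf n).2) S,
      closedIso_forbOutside hiso S, closedInduced_forbOutside hind S⟩
  have hmem (S : Set ℕ) (n : ℕ) : (family S).1 (f n) ↔ n ∈ S :=
    forbOutside_apply_iff (fun n => (hf n).1) hanti
  have hinj : Function.Injective family := fun S T h =>
    Set.ext fun n => by rw [← hmem S, ← hmem T, h]
  simpa using Cardinal.lift_mk_le_lift_mk_of_injective hinj
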